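/- Let L be a cubic algebra and let P and R be special subalgebras of L. Then P and R are similar (every f ∈ P satisfies f ∼ g for some g ∈ R, and every g ∈ R satisfies g ∼ f for some f ∈ P) if and only if there exists a P-Boolean special subalgebra Q with R = Δ(Q, P), where Δ(Q, P) := Q ∨ Δ(1, Q → P), Q → P := {h ∈ P : h ∨ g = 1 for all g ∈ Q}, Δ(1, B) := {Δ(1, b) : b ∈ B}, and A ∨ B := {a ∧ b : a ∈ A, b ∈ B, and a ∧ b exists in L}. -/

import Mathlib

universe u

/-- A cubic algebra: a join-semilattice with greatest element `⊤` and a binary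
operation `Δ` satisfying the axioms of Bailey–Oliveira. `dot x y` is the derived
implication operation `x·y = Δ(⊤, Δ(x ⊔ y, y)) ⊔ y`. -/
class CubicAlgebra (L : Type u) extends SemilatticeSup L, OrderTop L where
  Δ : L → L → L
  dot : L → L → L
  dot_def : ∀ x y : L, dot x y = Δ ⊤ (Δ (x ⊔ y) y) ⊔ y
  Δ_join : ∀ x y : L, x ≤ y → Δ y x ⊔ x = y
  Δ_comp : ∀ x y z : L, x ≤ y → y ≤ z → Δ z (Δ y x) = Δ (Δ z y) (Δ z x)
  Δ_invol : ∀ x y : L, x ≤ y → Δ y (Δ y x) = x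
  Δ_mono : ∀ x y z : L, x ≤ y → y ≤ z → Δ z x ≤ Δ z y
  dot_dot : ∀ x y : L, dot (dot x y) y = x ⊔ y
  dot_exch : ∀ x y z : L, dot x (dot y z) = dot y (dot x z)

namespace CubicAlgebra

variable {L : Type u} [CubicAlgebra L]

/-- `a ∼ b` iff `Δ(a ⊔ b, a) = b`. -/
def sim (a b : L) : Prop := Δ (a ⊔ b) a = b

/-- `m` is the greatest lower bound of `a` and `b`. -/
def IsMeet (a b m : L) : Prop := m ≤ a ∧ m ≤ b ∧ ∀ c : L, c ≤ a → c ≤ b → c ≤ m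

/-- A special subalgebra of a cubic algebra. -/
structure IsSpecial (S : Set L) : Prop where
  top_mem : (⊤ : L) ∈ S
  upward : ∀ x ∈ S, ∀ y : L, x ≤ y → y ∈ S
  dot_mem : ∀ x ∈ S, ∀ y ∈ S, dot x y ∈ S
  compat : ∀ x ∈ S, ∀ y ∈ S, x ⊔ Δ ⊤ y = ⊤
  meet_mem : ∀ x ∈ S, ∀ y ∈ S, ∀ m : L, IsMeet x y m → m ∈ S

/-- `A ∨ B` for sets: all existing meets `a ∧ b`, `a ∈ A`, `b ∈ B`. -/
def svee (A B : Set L) : Set L := {z | ∃ a ∈ A, ∃ b ∈ B, IsMeet a b z}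

/-- `J → I` for sets. -/
def sarrow (J I : Set L) : Set L := {h | h ∈ I ∧ ∀ g ∈ J, h ⊔ g = ⊤}

/-- `Δ(J, I) := J ∨ Δ(⊤, J → I)`. -/
def sDelta (J I : Set L) : Set L := svee J ((fun b => Δ ⊤ b) '' sarrow J I)

/-- `I_g := {Δ(g ⊔ f, f) : f ∈ I}`. -/
def shift (I : Set L) (g : L) : Set L := {z | ∃ f ∈ I, z = Δ (g ⊔ f) f}

end CubicAlgebra

/-!
For `P ∼ R` take `Q = P ∩ R`. If `f ∈ P` is similar to `r ∈ R`, then `f` is the meet of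
`f ⊔ r ∈ Q` and `f ⊔ Δ(⊤, r) ∈ Q → P`, since the latter is the implication `(f ⊔ r)·f`;
dually every `z ∈ R` is a meet `(z ⊔ f) ∧ Δ(⊤, f ⊔ Δ(⊤, z))`, so `R = Δ(Q, P)`.
Conversely, for `g ∈ Q` and `h ∈ Q → P` both `g ⊔ h` and `g ⊔ Δ(⊤, h)` are `⊤`, and then the
reflection `Δ(g, ·)` exchanges the meets `g ∧ h` and `g ∧ Δ(⊤, h)`; as `m ∼ Δ(g, m)` for
`m ≤ g`, this pairs the elements of `P` with those of `Δ(Q, P)`.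
-/

namespace CubicAlgebra

variable {L : Type u} [CubicAlgebra L]

section Reflection

lemma delta_le {a b : L} (h : a ≤ b) : Δ b a ≤ b :=
  le_sup_left.trans_eq (Δ_join a b h)

lemma delta_self (a : L) : Δ a a = a := by
  have h₁ : Δ a a ≤ a := delta_le le_rfl
  have h₂ : Δ a (Δ a a) ≤ Δ a a := Δ_mono _ _ _ h₁ le_rfl
  rw [Δ_invol a a le_rfl] at h₂
  exact le_antisymm h₁ h₂

lemma neg_neg (a : L) : Δ ⊤ (Δ ⊤ a) = a := Δ_invol a ⊤ le_top

lemma neg_mono {a b : L} (h : a ≤ b) : Δ ⊤ a ≤ Δ ⊤ b := Δ_mono a b ⊤ h le_top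

lemma neg_sup_self (a : L) : Δ ⊤ a ⊔ a = ⊤ := Δ_join a ⊤ le_top

def negOrderIso : L ≃o L where
  toFun := Δ ⊤
  invFun := Δ ⊤
  left_inv := neg_neg
  right_inv := neg_neg
  map_rel_iff' {a b} := ⟨fun h => by simpa only [neg_neg] using neg_mono (show Δ ⊤ a ≤ Δ ⊤ b from h), neg_mono⟩

lemma neg_sup (a b : L) : Δ ⊤ (a ⊔ b) = Δ ⊤ a ⊔ Δ ⊤ b :=
  (negOrderIso : L ≃o L).map_sup a b

end Reflection

section Implication

lemma dot_top_left (y : L) : dot ⊤ y = y := by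
  rw [dot_def, top_sup_eq, neg_neg, sup_idem]

lemma dot_of_le {x y : L} (h : x ≤ y) : dot x y = ⊤ := by
  rw [dot_def, sup_of_le_right h, delta_self, neg_sup_self]

lemma le_of_dot_eq_top {x y : L} (h : dot x y = ⊤) : x ≤ y := by
  have h' := dot_dot x y
  rw [h, dot_top_left] at h'
  exact h' ▸ le_sup_left

lemma le_dot (x y : L) : y ≤ dot x y := by
  rw [dot_def]
  exact le_sup_right

lemma dot_sup_left_self (x y : L) : dot (x ⊔ y) y = dot x y := by
  rw [dot_def, dot_def, sup_assoc, sup_idem]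

lemma dot_sup_self (x y : L) : dot x y ⊔ x = ⊤ := by
  set d := Δ (x ⊔ y) y
  have hd : d ≤ x ⊔ y := delta_le le_sup_right
  refine eq_top_iff.2 ?_
  calc (⊤ : L) = Δ ⊤ d ⊔ d := (neg_sup_self d).symm
    _ ≤ Δ ⊤ d ⊔ (x ⊔ y) := sup_le_sup_left hd _
    _ = dot x y ⊔ x := by rw [dot_def, sup_assoc, sup_comm y x]

lemma dot_of_sup_eq_top {x y : L} (h : x ⊔ y = ⊤) : dot x y = y := by
  rw [← dot_sup_left_self, h, dot_top_left]

lemma dot_dot_self (x y : L) : dot (dot x y) x = x := by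
  rw [← dot_sup_left_self, dot_sup_self, dot_top_left]

lemma dot_dot_self_left (x y : L) : dot x (dot x y) = dot x y := by
  nth_rewrite 1 [← dot_dot_self x y]
  exact dot_dot_self (dot x y) x

lemma dot_antitone_left {x y : L} (z : L) (h : x ≤ y) : dot y z ≤ dot x z := by
  apply le_of_dot_eq_top
  rw [dot_exch, dot_dot]
  exact dot_of_le (h.trans le_sup_left)

lemma dot_mono_right {y z : L} (x : L) (h : y ≤ z) : dot x y ≤ dot x z := by
  apply le_of_dot_eq_top
  have hz : dot (dot x y) z = dot (dot z y) (x ⊔ y) := by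
    conv_lhs => rw [← sup_of_le_left h, ← dot_dot z y]
    rw [dot_exch, dot_dot]
  rw [dot_exch, hz, dot_exch, dot_of_le le_sup_left, dot_of_le le_top]

lemma le_of_le_of_le_dot {c x y : L} (hx : c ≤ x) (hxy : c ≤ dot x y) : c ≤ y := by
  have hcy : c ⊔ y ≤ dot x y := sup_le hxy (le_dot x y)
  have h : c ⊔ y ≤ dot (c ⊔ y) y := by
    calc c ⊔ y ≤ x ⊔ y := sup_le_sup_right hx y
      _ = dot (dot x y) y := (dot_dot x y).symm
      _ ≤ dot (c ⊔ y) y := dot_antitone_left y hcy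
  have h' := dot_of_le h
  rw [dot_dot_self_left] at h'
  exact le_sup_left.trans (le_of_dot_eq_top h')

lemma isMeet_dot_of_le {x y : L} (h : y ≤ x) : IsMeet x (dot x y) y :=
  ⟨h, le_dot x y, fun _ hx hxy => le_of_le_of_le_dot hx hxy⟩

end Implication

section Similarity

lemma delta_le_neg_of_sup_eq_top {c g h : L} (hcg : c ≤ g) (hch : c ≤ h) (hgh : g ⊔ h = ⊤) :
    Δ g c ≤ Δ ⊤ h := by
  have hdot : Δ ⊤ (Δ g c) ≤ h := by
    calc Δ ⊤ (Δ g c) ≤ dot g c := by rw [dot_def, sup_of_le_left hcg]; exact le_sup_left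
      _ ≤ dot g h := dot_mono_right g hch
      _ = h := dot_of_sup_eq_top hgh
  simpa only [neg_neg] using neg_mono hdot

lemma sim_delta_of_le {m g : L} (h : m ≤ g) : sim m (Δ g m) := by
  rw [sim, sup_comm, Δ_join m g h]

lemma isMeet_of_sim {f r : L} (h : sim f r) : IsMeet (f ⊔ r) (f ⊔ Δ ⊤ r) f := by
  have hdot : dot (f ⊔ r) f = f ⊔ Δ ⊤ r := by
    rw [dot_def, sup_of_le_left le_sup_left, h, sup_comm]
  exact hdot ▸ isMeet_dot_of_le le_sup_left

lemma isMeet_delta_neg {g h m : L} (hgh : g ⊔ h = ⊤) (hgh' : g ⊔ Δ ⊤ h = ⊤)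
    (hm : IsMeet g h m) : IsMeet g (Δ ⊤ h) (Δ g m) := by
  refine ⟨delta_le hm.1, delta_le_neg_of_sup_eq_top hm.1 hm.2.1 hgh, fun c hcg hch => ?_⟩
  have hch' : Δ g c ≤ h := by
    simpa only [neg_neg] using delta_le_neg_of_sup_eq_top hcg hch hgh'
  calc c = Δ g (Δ g c) := (Δ_invol c g hcg).symm
    _ ≤ Δ g m := Δ_mono _ _ _ (hm.2.2 _ (delta_le hcg) hch') hm.1

end Similarity

section Special

variable {P Q R : Set L}

lemma IsSpecial.inter (hP : IsSpecial P) (hR : IsSpecial R) : IsSpecial (P ∩ R) where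
  top_mem := ⟨hP.top_mem, hR.top_mem⟩
  upward x hx y hxy := ⟨hP.upward x hx.1 y hxy, hR.upward x hx.2 y hxy⟩
  dot_mem x hx y hy := ⟨hP.dot_mem x hx.1 y hy.1, hR.dot_mem x hx.2 y hy.2⟩
  compat x hx y hy := hP.compat x hx.1 y hy.1
  meet_mem x hx y hy m hm := ⟨hP.meet_mem x hx.1 y hy.1 m hm, hR.meet_mem x hx.2 y hy.2 m hm⟩

lemma sup_neg_mem_sarrow {J : Set L} (hP : IsSpecial P) (hR : IsSpecial R) (hJR : J ⊆ R)
    {x r : L} (hx : x ∈ P) (hr : r ∈ R) : x ⊔ Δ ⊤ r ∈ sarrow J P := by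
  refine ⟨hP.upward x hx _ le_sup_left, fun g hg => eq_top_iff.2 ?_⟩
  calc (⊤ : L) = g ⊔ Δ ⊤ r := (hR.compat g (hJR hg) r hr).symm
    _ ≤ x ⊔ Δ ⊤ r ⊔ g := sup_le le_sup_right (le_sup_right.trans le_sup_left)

lemma neg_mem_of_mem_sarrow_inter (hP : IsSpecial P) (hR : IsSpecial R)
    (hPR : ∀ f ∈ P, ∃ g ∈ R, sim f g) {h : L} (hh : h ∈ sarrow (P ∩ R) P) : Δ ⊤ h ∈ R := by
  obtain ⟨w, hw, hsim⟩ := hPR h hh.1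
  have htop : h ⊔ w = ⊤ := by
    simpa only [← sup_assoc, sup_idem] using
      hh.2 (h ⊔ w) ⟨hP.upward h hh.1 _ le_sup_left, hR.upward w hw _ le_sup_right⟩
  rw [sim, htop] at hsim
  exact hsim ▸ hw

lemma exists_isMeet_inter_of_sim (hP : IsSpecial P) (hR : IsSpecial R)
    (hPR : ∀ f ∈ P, ∃ g ∈ R, sim f g) (f : L) (hf : f ∈ P) :
    ∃ g ∈ P ∩ R, ∃ h ∈ sarrow (P ∩ R) P, IsMeet g h f := by
  obtain ⟨r, hr, hsim⟩ := hPR f hf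
  exact ⟨f ⊔ r, ⟨hP.upward f hf _ le_sup_left, hR.upward r hr _ le_sup_right⟩,
    f ⊔ Δ ⊤ r, sup_neg_mem_sarrow hP hR Set.inter_subset_right hf hr, isMeet_of_sim hsim⟩

lemma subset_sDelta_inter (hP : IsSpecial P) (hR : IsSpecial R)
    (hRP : ∀ g ∈ R, ∃ f ∈ P, sim g f) : R ⊆ sDelta (P ∩ R) P := by
  intro z hz
  obtain ⟨f, hf, hsim⟩ := hRP z hz
  have hneg : Δ ⊤ (f ⊔ Δ ⊤ z) = z ⊔ Δ ⊤ f := by rw [neg_sup, neg_neg, sup_comm]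
  exact ⟨z ⊔ f, ⟨hP.upward f hf _ le_sup_right, hR.upward z hz _ le_sup_left⟩,
    _, ⟨_, sup_neg_mem_sarrow hP hR Set.inter_subset_right hf hz, rfl⟩,
    by simpa only [hneg] using isMeet_of_sim hsim⟩

lemma sDelta_inter_subset (hP : IsSpecial P) (hR : IsSpecial R)
    (hPR : ∀ f ∈ P, ∃ g ∈ R, sim f g) : sDelta (P ∩ R) P ⊆ R := by
  rintro z ⟨q, hq, _, ⟨h, hh, rfl⟩, hmeet⟩
  exact hR.meet_mem q hq.2 _ (neg_mem_of_mem_sarrow_inter hP hR hPR hh) z hmeet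

lemma exists_sim_mem_sDelta (hQP : Q ⊆ P)
    (hbool : ∀ f ∈ P, ∃ g ∈ Q, ∃ h ∈ sarrow Q P, IsMeet g h f) (hP : IsSpecial P)
    (f : L) (hf : f ∈ P) : ∃ g ∈ sDelta Q P, sim f g := by
  obtain ⟨g, hg, h, hh, hmeet⟩ := hbool f hf
  have hgh : g ⊔ h = ⊤ := sup_comm h g ▸ hh.2 g hg
  have hgh' : g ⊔ Δ ⊤ h = ⊤ := hP.compat g (hQP hg) h hh.1
  exact ⟨Δ g f, ⟨g, hg, _, ⟨h, hh, rfl⟩, isMeet_delta_neg hgh hgh' hmeet⟩,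
    sim_delta_of_le hmeet.1⟩

lemma exists_sim_mem_of_mem_sDelta (hQP : Q ⊆ P) (hP : IsSpecial P)
    (z : L) (hz : z ∈ sDelta Q P) : ∃ f ∈ P, sim z f := by
  obtain ⟨q, hq, _, ⟨h, hh, rfl⟩, hmeet⟩ := hz
  have hqh : q ⊔ h = ⊤ := sup_comm h q ▸ hh.2 q hq
  have hqh' : q ⊔ Δ ⊤ h = ⊤ := hP.compat q (hQP hq) h hh.1
  have hmeet' : IsMeet q h (Δ q z) := by
    simpa only [neg_neg] using isMeet_delta_neg hqh' (by rwa [neg_neg]) hmeet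
  exact ⟨Δ q z, hP.meet_mem q (hQP hq) h hh.1 _ hmeet', sim_delta_of_le hmeet.1⟩

end Special

end CubicAlgebra

open CubicAlgebra in
/-- `P ∼ R` (elementwise similarity of special subalgebras) iff `R = Δ(Q, P)`
for some `P`-Boolean special subalgebra `Q`. -/
theorem similar_iff_boolean_delta {L : Type u} [CubicAlgebra L] (P R : Set L)
    (hP : IsSpecial P) (hR : IsSpecial R) :
    ((∀ f ∈ P, ∃ g ∈ R, sim f g) ∧ (∀ g ∈ R, ∃ f ∈ P, sim g f)) ↔
      (∃ Q : Set L, IsSpecial Q ∧ Q ⊆ P ∧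
        (∀ f ∈ P, ∃ g ∈ Q, ∃ h ∈ sarrow Q P, IsMeet g h f) ∧
        R = sDelta Q P) := by
  constructor
  · rintro ⟨hPR, hRP⟩
    exact ⟨P ∩ R, hP.inter hR, Set.inter_subset_left,
      exists_isMeet_inter_of_sim hP hR hPR,
      (subset_sDelta_inter hP hR hRP).antisymm (sDelta_inter_subset hP hR hPR)⟩
  · rintro ⟨Q, -, hQP, hbool, rfl⟩
    exact ⟨exists_sim_mem_sDelta hQP hbool hP, exists_sim_mem_of_mem_sDelta hQP hP⟩
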